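/- arXiv:1903.05173 — 3 statements merged into one kernel-verified Lean document; each statement's English description precedes it below -/
import Mathlib

section
/- For natural numbers n, m and a real number r > −1, ∫₀¹∫₀¹ tⁿ sᵐ |t−s|ʳ ds dt = Γ(m+1)Γ(r+1)/((n+m+r+2)Γ(m+r+2)) + Γ(n+1)Γ(r+1)/((n+m+r+2)Γ(n+r+2)). -/
/-!
Split the square along the diagonal. On the triangle `s ≤ t` the substitution `s = t x` turns
the inner integral into `t ^ (m + r + 1) * B(m + 1, r + 1)`, so that triangle contributes
`B(m + 1, r + 1) / (n + m + r + 2)`; by Fubini the other triangle is the same integral with `n`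
and `m` exchanged.
-/

open Filter Real intervalIntegral

open MeasureTheory Set Function

theorem integral_rpow_mul_one_sub_rpow {a b : ℝ} (ha : -1 < a) (hb : -1 < b) :
    ∫ x in (0:ℝ)..1, x ^ a * (1 - x) ^ b
      = Gamma (a + 1) * Gamma (b + 1) / Gamma (a + b + 2) := by
  have hbeta : Complex.betaIntegral (a + 1 : ℝ) (b + 1 : ℝ)
      = ((∫ x in (0:ℝ)..1, x ^ a * (1 - x) ^ b : ℝ) : ℂ) := by
    rw [Complex.betaIntegral, ← intervalIntegral.integral_ofReal]
    refine integral_congr fun x hx => ?_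
    rw [uIcc_of_le zero_le_one] at hx
    push_cast
    rw [Complex.ofReal_cpow hx.1, Complex.ofReal_cpow (sub_nonneg.2 hx.2)]
    simp
  have hGamma := ProbabilityTheory.beta_eq_betaIntegralReal (a + 1) (b + 1)
    (by linarith) (by linarith)
  rw [hbeta, Complex.ofReal_re, ProbabilityTheory.beta] at hGamma
  rw [← hGamma]
  ring_nf

theorem integral_rpow_mul_sub_rpow (a b : ℝ) {t : ℝ} (ht : 0 < t) :
    ∫ s in (0:ℝ)..t, s ^ a * (t - s) ^ b
      = t ^ (a + b + 1) * ∫ x in (0:ℝ)..1, x ^ a * (1 - x) ^ b := by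
  have hscale := intervalIntegral.mul_integral_comp_mul_left (a := 0) (b := 1)
    (f := fun s => s ^ a * (t - s) ^ b) t
  rw [mul_zero, mul_one] at hscale
  rw [← hscale, ← intervalIntegral.integral_const_mul, ← intervalIntegral.integral_const_mul]
  refine integral_congr fun x hx => ?_
  rw [uIcc_of_le zero_le_one] at hx
  rw [show t - t * x = t * (1 - x) by ring, mul_rpow ht.le hx.1,
    mul_rpow ht.le (sub_nonneg.2 hx.2), rpow_add ht, rpow_add ht, rpow_one]
  ring

theorem intervalIntegrable_abs_rpow {r : ℝ} (hr : -1 < r) (a b : ℝ) :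
    IntervalIntegrable (fun x => |x| ^ r) volume a b := by
  have hpos : ∀ c, 0 ≤ c → IntervalIntegrable (fun x => |x| ^ r) volume 0 c := fun c hc =>
    (intervalIntegrable_rpow' hr).congr fun x hx => by
      rw [uIoc_of_le hc] at hx
      simp only [abs_of_pos hx.1]
  have hall : ∀ c, IntervalIntegrable (fun x => |x| ^ r) volume 0 c := by
    intro c
    rcases le_total 0 c with hc | hc
    · exact hpos c hc
    · simpa using (hpos (-c) (neg_nonneg.2 hc)).comp_sub_left 0
  exact (hall a).symm.trans (hall b)

theorem integrable_abs_sub_rpow {r : ℝ} (hr : -1 < r) (a b : ℝ) :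
    Integrable (fun p : ℝ × ℝ => |p.1 - p.2| ^ r)
      ((volume.restrict (Ioc a b)).prod (volume.restrict (Ioc a b))) := by
  -- On the square, `|t - s| ^ r = 1 * g (t - s)`: a convolution integrand, integrable by Fubini.
  set g := (uIcc (a - b) (b - a)).indicator fun x : ℝ => |x| ^ r
  have hg : Integrable g :=
    (integrable_indicator_iff measurableSet_uIcc).2
      ((intervalIntegrable_iff' (by simp)).1 (intervalIntegrable_abs_rpow hr _ _))
  have hconv := (integrable_const (1 : ℝ) (μ := volume.restrict (Ioc a b))).convolution_integrand
      (ContinuousLinearMap.mul ℝ ℝ) hg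
  refine (hconv.mono_measure (Measure.prod_mono Measure.restrict_le_self le_rfl)).congr ?_
  rw [Measure.prod_restrict]
  refine ae_restrict_of_forall_mem (measurableSet_Ioc.prod measurableSet_Ioc) fun p hp => ?_
  have hmem : p.1 - p.2 ∈ uIcc (a - b) (b - a) := by
    rw [uIcc_of_le (by linarith [hp.1.1, hp.1.2])]
    constructor <;> linarith [hp.1.1, hp.1.2, hp.2.1, hp.2.2]
  simp [g, indicator_of_mem hmem]

theorem integral_integral_eq_add_triangles {E : Type*} [NormedAddCommGroup E] [NormedSpace ℝ E]
    {a b : ℝ} (hab : a ≤ b) {F : ℝ → ℝ → E}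
    (hF : Integrable (uncurry F) ((volume.restrict (Ioc a b)).prod (volume.restrict (Ioc a b)))) :
    ∫ t in a..b, ∫ s in a..b, F t s
      = (∫ t in a..b, ∫ s in a..t, F t s) + ∫ s in a..b, ∫ t in a..s, F t s := by
  set μ := volume.restrict (Ioc a b)
  set L : ℝ → ℝ → E := fun t => (Iic t).indicator (F t)
  set U : ℝ → ℝ → E := fun t s => (Iio s).indicator (F · s) t
  have hLU : ∀ t s, F t s = L t s + U t s := fun t s => by
    by_cases hst : s ≤ t <;> simp [L, U, indicator, hst, not_lt.2, lt_of_not_ge]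
  have hL : Integrable (uncurry L) (μ.prod μ) := by
    have : uncurry L = {p : ℝ × ℝ | p.2 ≤ p.1}.indicator (uncurry F) := by
      funext ⟨t, s⟩; simp [L, indicator]
    exact this ▸ hF.indicator (measurableSet_le measurable_snd measurable_fst)
  have hU : Integrable (uncurry U) (μ.prod μ) := by
    have : uncurry U = {p : ℝ × ℝ | p.1 < p.2}.indicator (uncurry F) := by
      funext ⟨t, s⟩; simp [U, indicator]
    exact this ▸ hF.indicator (measurableSet_lt measurable_fst measurable_snd)
  have hsplit : ∀ᵐ t ∂μ, ∫ s, F t s ∂μ = ∫ s, L t s ∂μ + ∫ s, U t s ∂μ := by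
    filter_upwards [hL.prod_right_ae, hU.prod_right_ae] with t hLt hUt
    simp only [hLU t]
    exact integral_add hLt hUt
  have hL_eq : ∀ t ∈ Ioc a b, ∫ s, L t s ∂μ = ∫ s in a..t, F t s := fun t ht => by
    rw [MeasureTheory.integral_indicator measurableSet_Iic,
      Measure.restrict_restrict measurableSet_Iic, Iic_inter_Ioc_of_le ht.2, integral_of_le ht.1.le]
  have hU_eq : ∀ s ∈ Ioc a b, ∫ t, U t s ∂μ = ∫ t in a..s, F t s := fun s hs => by
    have hIoo : Iio s ∩ Ioc a b = Ioo a s := by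
      ext t; simp only [mem_inter_iff, mem_Iio, mem_Ioc, mem_Ioo]; grind
    rw [MeasureTheory.integral_indicator measurableSet_Iio,
      Measure.restrict_restrict measurableSet_Iio, hIoo, integral_of_le hs.1.le,
      integral_Ioc_eq_integral_Ioo]
  simp only [integral_of_le hab]
  rw [integral_congr_ae hsplit,
    integral_add (f := fun t => ∫ s, L t s ∂μ) (g := fun t => ∫ s, U t s ∂μ)
      hL.integral_prod_left hU.integral_prod_left,
    integral_integral_swap hU, setIntegral_congr_fun measurableSet_Ioc hL_eq,
    setIntegral_congr_fun measurableSet_Ioc hU_eq]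

theorem integrable_pow_mul_pow_mul_abs_sub_rpow (n m : ℕ) {r : ℝ} (hr : -1 < r) :
    Integrable (uncurry fun t s : ℝ => t ^ n * s ^ m * |t - s| ^ r)
      ((volume.restrict (Ioc 0 1)).prod (volume.restrict (Ioc 0 1))) := by
  refine (integrable_abs_sub_rpow hr 0 1).bdd_mul (c := 1) (by fun_prop) ?_
  rw [Measure.prod_restrict]
  refine ae_restrict_of_forall_mem (measurableSet_Ioc.prod measurableSet_Ioc) fun p hp => ?_
  rw [norm_mul, norm_pow, norm_pow, Real.norm_of_nonneg hp.1.1.le, Real.norm_of_nonneg hp.2.1.le]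
  exact mul_le_one₀ (pow_le_one₀ hp.1.1.le hp.1.2) (pow_nonneg hp.2.1.le _)
    (pow_le_one₀ hp.2.1.le hp.2.2)

theorem integral_triangle_pow_mul_pow_mul_abs_sub_rpow (n m : ℕ) {r : ℝ} (hr : -1 < r) :
    ∫ t in (0:ℝ)..1, ∫ s in (0:ℝ)..t, t ^ n * s ^ m * |t - s| ^ r
      = Gamma (m + 1) * Gamma (r + 1) / (((n : ℝ) + m + r + 2) * Gamma ((m : ℝ) + r + 2)) := by
  have hinner : ∀ t ∈ uIoc (0:ℝ) 1, ∫ s in (0:ℝ)..t, t ^ n * s ^ m * |t - s| ^ r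
      = (∫ x in (0:ℝ)..1, x ^ (m : ℝ) * (1 - x) ^ r) * t ^ ((n : ℝ) + m + r + 1) := by
    intro t ht
    rw [uIoc_of_le zero_le_one] at ht
    have hcongr : EqOn (fun s => t ^ n * s ^ m * |t - s| ^ r)
        (fun s => t ^ n * (s ^ (m : ℝ) * (t - s) ^ r)) (uIcc 0 t) := fun s hs => by
      rw [uIcc_of_le ht.1.le] at hs
      simp only [rpow_natCast, abs_of_nonneg (sub_nonneg.2 hs.2)]
      ring
    rw [integral_congr hcongr, intervalIntegral.integral_const_mul,
      integral_rpow_mul_sub_rpow _ _ ht.1, ← rpow_natCast,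
      show (n : ℝ) + m + r + 1 = n + (m + r + 1) by ring, rpow_add ht.1 n]
    ring
  have hm : (0 : ℝ) ≤ m := m.cast_nonneg
  have hnmr : -1 < (n : ℝ) + m + r + 1 := by linarith [(n.cast_nonneg : (0 : ℝ) ≤ n)]
  rw [integral_congr_ae (ae_of_all _ hinner), intervalIntegral.integral_const_mul,
    integral_rpow (Or.inl hnmr), integral_rpow_mul_one_sub_rpow (by linarith) hr, one_rpow,
    zero_rpow (by linarith)]
  field_simp
  ring

/-- For natural numbers `n, m` and real `r > −1`,
`∫₀¹∫₀¹ tⁿ sᵐ |t−s|ʳ ds dt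
  = Γ(m+1)Γ(r+1)/((n+m+r+2)Γ(m+r+2)) + Γ(n+1)Γ(r+1)/((n+m+r+2)Γ(n+r+2))`. -/
theorem double_integral_abs_pow (n m : ℕ) (r : ℝ) (hr : -1 < r) :
    ∫ t in (0:ℝ)..1, ∫ s in (0:ℝ)..1, t ^ n * s ^ m * |t - s| ^ r
      = Real.Gamma (m + 1) * Real.Gamma (r + 1)
          / (((n : ℝ) + m + r + 2) * Real.Gamma ((m : ℝ) + r + 2))
        + Real.Gamma (n + 1) * Real.Gamma (r + 1)
          / (((n : ℝ) + m + r + 2) * Real.Gamma ((n : ℝ) + r + 2)) := by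
  have hswap : ∫ s in (0:ℝ)..1, ∫ t in (0:ℝ)..s, t ^ n * s ^ m * |t - s| ^ r
      = ∫ s in (0:ℝ)..1, ∫ t in (0:ℝ)..s, s ^ m * t ^ n * |s - t| ^ r :=
    integral_congr fun s _ => integral_congr fun t _ => by
      simp only [abs_sub_comm t s, mul_comm (t ^ n)]
  rw [integral_integral_eq_add_triangles zero_le_one
      (integrable_pow_mul_pow_mul_abs_sub_rpow n m hr), hswap,
    integral_triangle_pow_mul_pow_mul_abs_sub_rpow n m hr,
    integral_triangle_pow_mul_pow_mul_abs_sub_rpow m n hr, add_comm (m : ℝ) n]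
end

section
/- For H ∈ (1/2, 1), the limit as n → ∞ of n^(2H) ∫₀¹∫₀¹ xⁿ yⁿ |x−y|^(2H−2) dy dx equals Γ(2H−1). -/
/-!
Put `a = 2H - 2 > -1` and `s = 2H - 1 = a + 1`. The integrand is symmetric in `x, y`, so by
Fubini the double integral is twice the integral over the triangle `y < x`. There the substitution
`y = x t` turns the inner integral into `x ^ (n + 1 + a) B(n + 1, s)`, and integrating in `x` gives
`2 B(n + 1, s) / (2n + 2H)` with `B(n + 1, s) = n! Γ(s) / Γ(n + 1 + s)`. After multiplying by
`n ^ (2H)` it remains to see that `n ^ s n! / Γ(n + 1 + s) → 1`, which is Euler's limit formula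
`Γ(s) = lim n ^ s n! / (s (s + 1) ⋯ (s + n))`.
-/

open Filter Real intervalIntegral MeasureTheory Set

theorem integral_integral_add_swap {α E : Type*} [MeasurableSpace α] [NormedAddCommGroup E]
    [NormedSpace ℝ E] {μ : Measure α} [SFinite μ] {F : α × α → E}
    (hF : Integrable F (μ.prod μ)) :
    ∫ x, ∫ y, (F (x, y) + F (y, x)) ∂μ ∂μ = 2 • ∫ x, ∫ y, F (x, y) ∂μ ∂μ := by
  have h_split : ∀ᵐ x ∂μ,
      ∫ y, (F (x, y) + F (y, x)) ∂μ = ∫ y, F (x, y) ∂μ + ∫ y, F (y, x) ∂μ := by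
    filter_upwards [hF.prod_right_ae, hF.swap.prod_right_ae] with x h₁ h₂
    exact integral_add h₁ h₂
  have h_swap : Integrable (fun x ↦ ∫ y, F (y, x) ∂μ) μ := hF.swap.integral_prod_left
  rw [integral_congr_ae h_split, integral_add hF.integral_prod_left h_swap,
    integral_integral_swap (f := fun x y ↦ F (y, x)) hF.swap, two_nsmul]

theorem Real.integral_rpow_mul_one_sub_rpow {α β : ℝ} (hα : 0 < α) (hβ : 0 < β) :
    ∫ t in (0:ℝ)..1, t ^ (α - 1) * (1 - t) ^ (β - 1)
      = Gamma α * Gamma β / Gamma (α + β) := by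
  have h_beta : Complex.betaIntegral α β
      = ((∫ t in (0:ℝ)..1, t ^ (α - 1) * (1 - t) ^ (β - 1) : ℝ) : ℂ) := by
    rw [Complex.betaIntegral, ← intervalIntegral.integral_ofReal]
    refine integral_congr fun t ht ↦ ?_
    rw [uIcc_of_le zero_le_one] at ht
    simp only [Complex.ofReal_mul, Complex.ofReal_cpow ht.1,
      Complex.ofReal_cpow (sub_nonneg.2 ht.2)]
    push_cast
    rfl
  have := Complex.betaIntegral_eq_Gamma_mul_div α β (by simpa) (by simpa)
  rw [h_beta, ← Complex.ofReal_add, Complex.Gamma_ofReal, Complex.Gamma_ofReal,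
    Complex.Gamma_ofReal] at this
  exact_mod_cast this

theorem Real.prod_range_add_eq_Gamma_div {s : ℝ} (hs : 0 < s) (n : ℕ) :
    ∏ j ∈ Finset.range (n + 1), (s + j) = Gamma (s + n + 1) / Gamma s := by
  have hΓ : Gamma s ≠ 0 := (Gamma_pos_of_pos hs).ne'
  induction n with
  | zero => simp [Gamma_add_one hs.ne', hΓ]
  | succ n ih =>
    rw [Finset.prod_range_succ, ih, Nat.cast_succ, ← add_assoc,
      Gamma_add_one (by positivity : s + n + 1 ≠ 0)]
    field_simp

theorem Real.tendsto_rpow_mul_factorial_div_Gamma {s : ℝ} (hs : 0 < s) :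
    Tendsto (fun n : ℕ ↦ (n : ℝ) ^ s * n.factorial / Gamma (n + 1 + s)) atTop (nhds 1) := by
  have hΓ : Gamma s ≠ 0 := (Gamma_pos_of_pos hs).ne'
  have h := (GammaSeq_tendsto_Gamma s).div_const (Gamma s)
  rw [div_self hΓ] at h
  refine h.congr fun n ↦ ?_
  rw [GammaSeq, prod_range_add_eq_Gamma_div hs, show s + n + 1 = n + 1 + s by ring]
  field_simp

theorem integral_pow_mul_sub_rpow (n : ℕ) (a : ℝ) {x : ℝ} (hx : 0 < x) :
    ∫ y in (0:ℝ)..x, y ^ n * (x - y) ^ a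
      = x ^ ((n : ℝ) + a + 1) * ∫ t in (0:ℝ)..1, t ^ n * (1 - t) ^ a := by
  have h_scale : ∀ t ∈ uIcc (0:ℝ) 1,
      (x * t) ^ n * (x - x * t) ^ a = x ^ ((n : ℝ) + a) * (t ^ n * (1 - t) ^ a) := by
    intro t ht
    rw [uIcc_of_le zero_le_one] at ht
    rw [← mul_one_sub, mul_rpow hx.le (sub_nonneg.2 ht.2), mul_pow, rpow_add hx, rpow_natCast]
    ring
  calc ∫ y in (0:ℝ)..x, y ^ n * (x - y) ^ a
      = x * ∫ t in (0:ℝ)..1, (x * t) ^ n * (x - x * t) ^ a := by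
        rw [integral_comp_mul_left (fun y ↦ y ^ n * (x - y) ^ a) hx.ne', mul_zero, mul_one,
          smul_eq_mul, mul_inv_cancel_left₀ hx.ne']
    _ = x ^ ((n : ℝ) + a + 1) * ∫ t in (0:ℝ)..1, t ^ n * (1 - t) ^ a := by
        rw [integral_congr h_scale, intervalIntegral.integral_const_mul, rpow_add_one hx.ne']
        ring

theorem intervalIntegrable_pow_mul_sub_rpow (n : ℕ) {a : ℝ} (ha : -1 < a) (x : ℝ) :
    IntervalIntegrable (fun y ↦ y ^ n * (x - y) ^ a) volume 0 x := by
  have h : IntervalIntegrable (fun y ↦ (x - y) ^ a) volume 0 x := by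
    simpa using
      ((intervalIntegral.intervalIntegrable_rpow' (a := 0) (b := x) ha).comp_sub_left x).symm
  exact h.continuousOn_mul (by fun_prop)

noncomputable def lowerTriangleKernel (n : ℕ) (a : ℝ) (p : ℝ × ℝ) : ℝ :=
  if p.2 < p.1 then p.1 ^ n * p.2 ^ n * (p.1 - p.2) ^ a else 0

namespace lowerTriangleKernel

variable (n : ℕ)

theorem measurable (a : ℝ) : Measurable (lowerTriangleKernel n a) :=
  Measurable.ite (measurableSet_lt measurable_snd measurable_fst) (by fun_prop) measurable_const

theorem nonneg (a : ℝ) {p : ℝ × ℝ} (hp : 0 ≤ p.2) : 0 ≤ lowerTriangleKernel n a p := by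
  unfold lowerTriangleKernel
  split_ifs with h
  · have hp₁ : 0 ≤ p.1 := hp.trans h.le
    exact mul_nonneg (mul_nonneg (pow_nonneg hp₁ n) (pow_nonneg hp n))
      (rpow_nonneg (sub_nonneg.2 h.le) a)
  · exact le_rfl

theorem add_swap (a : ℝ) {x y : ℝ} (h : y ≠ x) :
    lowerTriangleKernel n a (x, y) + lowerTriangleKernel n a (y, x)
      = x ^ n * y ^ n * |x - y| ^ a := by
  unfold lowerTriangleKernel
  rcases h.lt_or_gt with h | h
  · simp [h, h.not_gt, abs_of_pos (sub_pos.2 h)]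
  · simp [h, h.not_gt, abs_of_neg (sub_neg.2 h), mul_comm]

theorem slice_eq_indicator (a x : ℝ) :
    (fun y ↦ lowerTriangleKernel n a (x, y))
      = (Iio x).indicator (fun y ↦ x ^ n * (y ^ n * (x - y) ^ a)) := by
  funext y
  simp only [lowerTriangleKernel, indicator_apply, mem_Iio]
  split_ifs <;> ring

theorem integrable_slice {a : ℝ} (ha : -1 < a) {x : ℝ} (hx : x ∈ Ioo 0 1) :
    Integrable (fun y ↦ lowerTriangleKernel n a (x, y)) (volume.restrict (Ioo 0 1)) := by
  rw [slice_eq_indicator, integrable_indicator_iff measurableSet_Iio, IntegrableOn,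
    Measure.restrict_restrict measurableSet_Iio, Iio_inter_Ioo, min_eq_left hx.2.le]
  exact (((intervalIntegrable_pow_mul_sub_rpow n ha x).const_mul (x ^ n)).1).mono_set
    Ioo_subset_Ioc_self

theorem integral_slice (a : ℝ) {x : ℝ} (hx : x ∈ Ioo 0 1) :
    ∫ y in Ioo 0 1, lowerTriangleKernel n a (x, y)
      = x ^ (2 * n + 1 + a) * ∫ t in (0:ℝ)..1, t ^ n * (1 - t) ^ a := by
  rw [slice_eq_indicator, MeasureTheory.integral_indicator measurableSet_Iio,
    Measure.restrict_restrict measurableSet_Iio, Iio_inter_Ioo, min_eq_left hx.2.le,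
    ← integral_Ioc_eq_integral_Ioo, ← integral_of_le hx.1.le,
    intervalIntegral.integral_const_mul, integral_pow_mul_sub_rpow n a hx.1, ← mul_assoc,
    ← rpow_natCast, ← rpow_add hx.1]
  ring_nf

theorem integrable {a : ℝ} (ha : -1 < a) :
    Integrable (lowerTriangleKernel n a)
      ((volume.restrict (Ioo 0 1)).prod (volume.restrict (Ioo 0 1))) := by
  rw [integrable_prod_iff (measurable n a).aestronglyMeasurable]
  refine ⟨ae_restrict_of_forall_mem measurableSet_Ioo fun x hx ↦ integrable_slice n ha hx, ?_⟩
  have h_pow : IntegrableOn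
      (fun x : ℝ ↦ x ^ (2 * n + 1 + a) * ∫ t in (0:ℝ)..1, t ^ n * (1 - t) ^ a) (Ioo 0 1) := by
    refine (((intervalIntegral.intervalIntegrable_rpow' ?_).mul_const _).1).mono_set
      Ioo_subset_Ioc_self
    linarith [(n.cast_nonneg : (0:ℝ) ≤ n)]
  refine h_pow.congr (ae_restrict_of_forall_mem measurableSet_Ioo fun x hx ↦ ?_)
  refine (integral_slice n a hx).symm.trans
    (setIntegral_congr_fun measurableSet_Ioo fun y hy ↦ ?_)
  exact (norm_of_nonneg (nonneg n a hy.1.le)).symm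

end lowerTriangleKernel

theorem integral_integral_pow_mul_pow_mul_abs_sub_rpow (n : ℕ) {a : ℝ} (ha : -1 < a) :
    ∫ x in (0:ℝ)..1, ∫ y in (0:ℝ)..1, x ^ n * y ^ n * |x - y| ^ a
      = 2 * (∫ t in (0:ℝ)..1, t ^ n * (1 - t) ^ a) / (2 * n + 2 + a) := by
  set B := ∫ t in (0:ℝ)..1, t ^ n * (1 - t) ^ a
  have h_Ioo (f : ℝ → ℝ) : ∫ x in (0:ℝ)..1, f x = ∫ x in Ioo 0 1, f x := by
    rw [integral_of_le zero_le_one, integral_Ioc_eq_integral_Ioo]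
  have h_sym (x : ℝ) : ∫ y in Ioo 0 1, x ^ n * y ^ n * |x - y| ^ a
      = ∫ y in Ioo 0 1, (lowerTriangleKernel n a (x, y) + lowerTriangleKernel n a (y, x)) :=
    integral_congr_ae <| ae_restrict_of_ae <|
      (volume.ae_ne x).mono fun y hy ↦ (lowerTriangleKernel.add_swap n a hy).symm
  have h_half : ∫ x in Ioo 0 1, ∫ y in Ioo 0 1, lowerTriangleKernel n a (x, y)
      = ∫ x in (0:ℝ)..1, x ^ (2 * n + 1 + a) * B := by
    rw [h_Ioo]
    exact setIntegral_congr_fun measurableSet_Ioo fun x hx ↦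
      lowerTriangleKernel.integral_slice n a hx
  have h_pos : 0 < 2 * (n : ℝ) + 2 + a := by linarith [(n.cast_nonneg : (0:ℝ) ≤ n)]
  simp_rw [h_Ioo, h_sym]
  rw [integral_integral_add_swap (lowerTriangleKernel.integrable n ha), h_half,
    intervalIntegral.integral_mul_const, integral_rpow (Or.inl (by linarith)), one_rpow,
    zero_rpow (by linarith), nsmul_eq_mul]
  field_simp
  ring

theorem limit_double_integral_fbm_general (H : ℝ) (hH : 1 / 2 < H) :
    Tendsto (fun n : ℕ =>
        (n : ℝ) ^ (2 * H) *
          ∫ x in (0:ℝ)..1, ∫ y in (0:ℝ)..1, x ^ n * y ^ n * |x - y| ^ (2 * H - 2))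
      atTop (nhds (Real.Gamma (2 * H - 1))) := by
  have hs : 0 < 2 * H - 1 := by linarith
  have h_lim := ((tendsto_rpow_mul_factorial_div_Gamma hs).mul
    (tendsto_natCast_div_add_atTop H)).const_mul (Gamma (2 * H - 1))
  rw [mul_one, mul_one] at h_lim
  refine h_lim.congr fun n ↦ ?_
  have h_beta : ∫ t in (0:ℝ)..1, t ^ n * (1 - t) ^ (2 * H - 2)
      = n.factorial * Gamma (2 * H - 1) / Gamma (n + 1 + (2 * H - 1)) := by
    have := integral_rpow_mul_one_sub_rpow (α := n + 1) (by positivity) hs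
    simp only [add_sub_cancel_right, rpow_natCast, Gamma_nat_eq_factorial] at this
    rwa [show 2 * H - 1 - 1 = 2 * H - 2 by ring] at this
  have h_pow : (n : ℝ) ^ (2 * H) = (n : ℝ) ^ (2 * H - 1) * n := by
    rw [← rpow_add_one' n.cast_nonneg (by linarith), sub_add_cancel]
  have hΓ : 0 < Gamma (n + 1 + (2 * H - 1)) := Gamma_pos_of_pos (by positivity)
  have hH0 : (n : ℝ) + H ≠ 0 := by positivity
  rw [integral_integral_pow_mul_pow_mul_abs_sub_rpow n (by linarith), h_beta, h_pow,
    show 2 * (n : ℝ) + 2 + (2 * H - 2) = 2 * (n + H) by ring]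
  field_simp

/-- For `H ∈ (1/2, 1)`,
`n^(2H) ∫₀¹∫₀¹ xⁿ yⁿ |x−y|^(2H−2) dy dx → Γ(2H−1)` as `n → ∞`. -/
theorem limit_double_integral_fbm (H : ℝ) (hH : 1 / 2 < H) (hH1 : H < 1) :
    Tendsto (fun n : ℕ =>
        (n : ℝ) ^ (2 * H) *
          ∫ x in (0:ℝ)..1, ∫ y in (0:ℝ)..1, x ^ n * y ^ n * |x - y| ^ (2 * H - 2))
      atTop (nhds (Real.Gamma (2 * H - 1))) :=
  limit_double_integral_fbm_general H hH
end

section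
/- For H ∈ (0,1/2), any δ ∈ [0,1), and n ≥ 1, n^(2H) ∫₀^δ ( ∫_s^δ (tⁿ − sⁿ)(t−s)^(H−3/2) dt )² ds ≤ C n^(2H+2) δ^(2n−2) for a constant C depending only on H and δ, and hence this quantity converges to 0 as n → ∞. -/
/-! Since `|tⁿ − sⁿ| ≤ n |t − s| δ^(n−1)` on `[0, δ]`, the inner integrand is dominated by
`n δ^(n−1) (t − s)^(H−1/2)`, which is integrable because `H > −1/2`. Integrating in `t` and then
the square in `s` gives the bound with `C = δ^(2H+2) / ((H + 1/2)² (2H + 2))`, and the polynomial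
factor `n^(2H+2)` is beaten by the geometric decay of `δ^(2n−2)`. -/

open Filter Real intervalIntegral MeasureTheory Set

theorem intervalIntegral.integral_mono_on_of_nonneg {μ : Measure ℝ} {f g : ℝ → ℝ} {a b : ℝ}
    (hab : a ≤ b) (hg : IntervalIntegrable g μ a b) (hf : ∀ x ∈ Icc a b, 0 ≤ f x)
    (hfg : ∀ x ∈ Icc a b, f x ≤ g x) :
    ∫ x in a..b, f x ∂μ ≤ ∫ x in a..b, g x ∂μ := by
  rw [integral_of_le hab, integral_of_le hab]
  refine integral_mono_of_nonneg ?_ hg.1 ?_ <;>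
    refine (ae_restrict_iff' measurableSet_Ioc).2 (Eventually.of_forall fun x hx => ?_)
  exacts [hf x (Ioc_subset_Icc_self hx), hfg x (Ioc_subset_Icc_self hx)]

theorem intervalIntegrable_sub_rpow {c : ℝ} (hc : -1 < c) (a b s : ℝ) :
    IntervalIntegrable (fun t => (t - s) ^ c) volume a b := by
  simpa using (intervalIntegrable_rpow' (a := a - s) (b := b - s) hc).comp_sub_right s

theorem intervalIntegrable_rpow_sub {c : ℝ} (hc : -1 < c) (a b s : ℝ) :
    IntervalIntegrable (fun t => (s - t) ^ c) volume a b := by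
  simpa using (intervalIntegrable_rpow' (a := s - a) (b := s - b) hc).comp_sub_left s

theorem integral_sub_rpow {c : ℝ} (hc : -1 < c) (a b : ℝ) :
    ∫ t in a..b, (t - a) ^ c = (b - a) ^ (c + 1) / (c + 1) := by
  rw [integral_comp_sub_right (fun t => t ^ c), sub_self, integral_rpow (.inl hc),
    zero_rpow (by linarith), sub_zero]

theorem integral_rpow_sub {c : ℝ} (hc : -1 < c) (a b : ℝ) :
    ∫ t in a..b, (b - t) ^ c = (b - a) ^ (c + 1) / (c + 1) := by
  rw [integral_comp_sub_left (fun t => t ^ c), sub_self, integral_rpow (.inl hc),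
    zero_rpow (by linarith), sub_zero]

section Estimate

variable {α δ s t : ℝ}

theorem pow_sub_pow_mul_rpow_nonneg (α : ℝ) (n : ℕ) (hs : 0 ≤ s) (hst : s ≤ t) :
    0 ≤ (t ^ n - s ^ n) * (t - s) ^ α :=
  mul_nonneg (sub_nonneg.2 (pow_le_pow_left₀ hs hst n)) (rpow_nonneg (sub_nonneg.2 hst) α)

theorem pow_sub_pow_mul_rpow_le (α : ℝ) (n : ℕ) (hs : 0 ≤ s) (hst : s ≤ t) (htδ : t ≤ δ) :
    (t ^ n - s ^ n) * (t - s) ^ α ≤ n * δ ^ (n - 1) * (t - s) ^ (α + 1) := by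
  have hδ : 0 ≤ δ := hs.trans (hst.trans htδ)
  rcases hst.eq_or_lt with rfl | hlt
  · simp only [sub_self, zero_mul]
    positivity
  have hts : 0 < t - s := sub_pos.2 hlt
  have hmax : max |t| |s| = t := by
    rw [abs_of_nonneg (hs.trans hst), abs_of_nonneg hs, max_eq_left hst]
  calc (t ^ n - s ^ n) * (t - s) ^ α
      ≤ (|t - s| * n * max |t| |s| ^ (n - 1)) * (t - s) ^ α := by
        gcongr
        exact (le_abs_self _).trans (abs_pow_sub_pow_le t s n)
    _ ≤ ((t - s) * n * δ ^ (n - 1)) * (t - s) ^ α := by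
        rw [abs_of_pos hts, hmax]
        gcongr
        exact hs.trans hst
    _ = n * δ ^ (n - 1) * (t - s) ^ (α + 1) := by
        rw [rpow_add_one hts.ne']
        ring

theorem integral_pow_sub_pow_mul_rpow_nonneg (α : ℝ) (n : ℕ) (hs : 0 ≤ s) (hsδ : s ≤ δ) :
    0 ≤ ∫ t in s..δ, (t ^ n - s ^ n) * (t - s) ^ α :=
  integral_nonneg hsδ fun _ ht => pow_sub_pow_mul_rpow_nonneg α n hs ht.1

theorem integral_pow_sub_pow_mul_rpow_le (hα : -2 < α) (n : ℕ) (hs : 0 ≤ s) (hsδ : s ≤ δ) :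
    ∫ t in s..δ, (t ^ n - s ^ n) * (t - s) ^ α
      ≤ n * δ ^ (n - 1) / (α + 2) * (δ - s) ^ (α + 2) := by
  calc ∫ t in s..δ, (t ^ n - s ^ n) * (t - s) ^ α
      ≤ ∫ t in s..δ, n * δ ^ (n - 1) * (t - s) ^ (α + 1) :=
        integral_mono_on_of_nonneg hsδ
          ((intervalIntegrable_sub_rpow (by linarith) s δ s).const_mul _)
          (fun _ ht => pow_sub_pow_mul_rpow_nonneg α n hs ht.1)
          (fun _ ht => pow_sub_pow_mul_rpow_le α n hs ht.1 ht.2)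
    _ = n * δ ^ (n - 1) / (α + 2) * (δ - s) ^ (α + 2) := by
        rw [intervalIntegral.integral_const_mul, integral_sub_rpow (by linarith), show α + 1 + 1 = α + 2 by ring]
        ring

theorem integral_sq_integral_pow_sub_pow_mul_rpow_le (hα : -2 < α) (n : ℕ) (hδ : 0 ≤ δ) :
    ∫ s in (0:ℝ)..δ, (∫ t in s..δ, (t ^ n - s ^ n) * (t - s) ^ α) ^ 2
      ≤ δ ^ (2 * α + 5) / ((α + 2) ^ 2 * (2 * α + 5)) * n ^ 2 * δ ^ (2 * n - 2) := by
  have hα2 : α + 2 ≠ 0 := by linarith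
  have hα5 : 2 * α + 5 ≠ 0 := by linarith
  calc ∫ s in (0:ℝ)..δ, (∫ t in s..δ, (t ^ n - s ^ n) * (t - s) ^ α) ^ 2
      ≤ ∫ s in (0:ℝ)..δ, (n * δ ^ (n - 1) / (α + 2)) ^ 2 * (δ - s) ^ (2 * α + 4) := by
        refine integral_mono_on_of_nonneg hδ
          ((intervalIntegrable_rpow_sub (by linarith) 0 δ δ).const_mul _)
          (fun _ _ => sq_nonneg _) fun s hs => ?_
        have hsδ : 0 ≤ δ - s := sub_nonneg.2 hs.2
        calc (∫ t in s..δ, (t ^ n - s ^ n) * (t - s) ^ α) ^ 2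
            ≤ (n * δ ^ (n - 1) / (α + 2) * (δ - s) ^ (α + 2)) ^ 2 := by
              gcongr
              exacts [integral_pow_sub_pow_mul_rpow_nonneg α n hs.1 hs.2,
                integral_pow_sub_pow_mul_rpow_le hα n hs.1 hs.2]
          _ = (n * δ ^ (n - 1) / (α + 2)) ^ 2 * (δ - s) ^ (2 * α + 4) := by
              rw [mul_pow, ← rpow_mul_natCast hsδ]
              push_cast
              ring_nf
    _ = δ ^ (2 * α + 5) / ((α + 2) ^ 2 * (2 * α + 5)) * n ^ 2 * δ ^ (2 * n - 2) := by
        rw [intervalIntegral.integral_const_mul, integral_rpow_sub (by linarith), sub_zero,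
          show 2 * α + 4 + 1 = 2 * α + 5 by ring, show 2 * n - 2 = (n - 1) * 2 by omega, pow_mul]
        field_simp

end Estimate

theorem tendsto_rpow_mul_pow_pred_of_lt_one (p : ℝ) {r : ℝ} (hr0 : 0 ≤ r) (hr1 : r < 1) :
    Tendsto (fun n : ℕ => (n : ℝ) ^ p * r ^ (n - 1)) atTop (nhds 0) := by
  obtain ⟨σ, hrσ, hσ1⟩ := exists_between hr1
  have hσ0 : 0 < σ := hr0.trans_lt hrσ
  have hlim := (tendsto_pow_const_mul_const_pow_of_abs_lt_one ⌈p⌉₊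
    ((abs_of_pos hσ0).trans_lt hσ1)).const_mul σ⁻¹
  rw [mul_zero] at hlim
  refine squeeze_zero' (Eventually.of_forall fun n => by positivity) ?_ hlim
  filter_upwards [eventually_ge_atTop 1] with n hn
  have hn1 : (1 : ℝ) ≤ n := by exact_mod_cast hn
  calc (n : ℝ) ^ p * r ^ (n - 1)
      ≤ n ^ (⌈p⌉₊ : ℝ) * σ ^ (n - 1) := by
        gcongr
        exact Nat.le_ceil p
    _ = σ⁻¹ * (n ^ ⌈p⌉₊ * σ ^ n) := by
        rw [rpow_natCast, ← pow_sub_one_mul (by omega : n ≠ 0) σ]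
        field_simp

theorem h7_estimate_general (H : ℝ) (hH0 : 0 < H)
    (δ : ℝ) (hδ0 : 0 ≤ δ) (hδ1 : δ < 1) :
    (∃ C : ℝ, ∀ n : ℕ, 1 ≤ n →
      (n : ℝ) ^ (2 * H) *
          ∫ s in (0:ℝ)..δ, (∫ t in s..δ, (t ^ n - s ^ n) * (t - s) ^ (H - 3 / 2)) ^ 2
        ≤ C * (n : ℝ) ^ (2 * H + 2) * δ ^ (2 * n - 2)) ∧
    Tendsto (fun n : ℕ =>
        (n : ℝ) ^ (2 * H) *
          ∫ s in (0:ℝ)..δ, (∫ t in s..δ, (t ^ n - s ^ n) * (t - s) ^ (H - 3 / 2)) ^ 2)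
      atTop (nhds 0) := by
  have hα : -2 < H - 3 / 2 := by linarith
  set C := δ ^ (2 * (H - 3 / 2) + 5) / ((H - 3 / 2 + 2) ^ 2 * (2 * (H - 3 / 2) + 5))
  have bound : ∀ n : ℕ,
      (n : ℝ) ^ (2 * H) *
          ∫ s in (0:ℝ)..δ, (∫ t in s..δ, (t ^ n - s ^ n) * (t - s) ^ (H - 3 / 2)) ^ 2
        ≤ C * (n : ℝ) ^ (2 * H + 2) * δ ^ (2 * n - 2) := fun n =>
    calc _ ≤ (n : ℝ) ^ (2 * H) * (C * n ^ 2 * δ ^ (2 * n - 2)) := by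
          gcongr
          exact integral_sq_integral_pow_sub_pow_mul_rpow_le hα n hδ0
      _ = C * (n : ℝ) ^ (2 * H + 2) * δ ^ (2 * n - 2) := by
          rw [rpow_add' n.cast_nonneg (by linarith), rpow_two]
          ring
  refine ⟨⟨C, fun n _ => bound n⟩, squeeze_zero (fun n => ?_) bound ?_⟩
  · exact mul_nonneg (rpow_nonneg n.cast_nonneg _) (integral_nonneg hδ0 fun _ _ => sq_nonneg _)
  · have hδ2 : δ ^ 2 < 1 := by nlinarith
    simpa [mul_assoc, show ∀ n, 2 * n - 2 = 2 * (n - 1) by omega, pow_mul] using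
      (tendsto_rpow_mul_pow_pred_of_lt_one (2 * H + 2) (sq_nonneg δ) hδ2).const_mul C

/-- For `H ∈ (0,1/2)` and `δ ∈ [0,1)`, there is a constant `C` (depending only on `H`
and `δ`) such that for all `n ≥ 1`,
`n^(2H) ∫₀^δ (∫_s^δ (tⁿ − sⁿ)(t−s)^(H−3/2) dt)² ds ≤ C n^(2H+2) δ^(2n−2)`,
and hence this quantity converges to `0` as `n → ∞`. -/
theorem h7_estimate (H : ℝ) (hH0 : 0 < H) (hH1 : H < 1 / 2)
    (δ : ℝ) (hδ0 : 0 ≤ δ) (hδ1 : δ < 1) :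
    (∃ C : ℝ, ∀ n : ℕ, 1 ≤ n →
      (n : ℝ) ^ (2 * H) *
          ∫ s in (0:ℝ)..δ, (∫ t in s..δ, (t ^ n - s ^ n) * (t - s) ^ (H - 3 / 2)) ^ 2
        ≤ C * (n : ℝ) ^ (2 * H + 2) * δ ^ (2 * n - 2)) ∧
    Tendsto (fun n : ℕ =>
        (n : ℝ) ^ (2 * H) *
          ∫ s in (0:ℝ)..δ, (∫ t in s..δ, (t ^ n - s ^ n) * (t - s) ^ (H - 3 / 2)) ^ 2)
      atTop (nhds 0) :=
  h7_estimate_general H hH0 δ hδ0 hδ1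
end
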